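/- For a smooth map f : S¹ → S¹ of degree d with all fixed points nondegenerate, the sum of the fixed point indices sign(det(id - D_p f)) over the fixed points p of f equals the Lefschetz number 1 - d. -/

import Mathlib

open Set Filter Topology


lemma clf_int_eq_of_abs_lt {k m : ℤ} (h : |(k:ℝ) - m| < 1) : k = m := by
  have h2 : |((k - m : ℤ) : ℝ)| < 1 := by push_cast; exact h
  have h3 : (|k - m| : ℝ) < 1 := by rw [← Int.cast_abs] at h2; exact_mod_cast h2
  have h4 : |k - m| < 1 := by exact_mod_cast h3
  rw [abs_lt] at h4; omega

lemma clf_deriv_nonneg_right {G : ℝ → ℝ} {g a b : ℝ} (hab : a < b)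
    (hd : HasDerivAt G g a) (h : ∀ x ∈ Set.Ioo a b, G a ≤ G x) : 0 ≤ g := by
  have hne : (𝓝[Set.Ioo a b] a).NeBot := by
    refine mem_closure_iff_nhdsWithin_neBot.mp ?_
    rw [closure_Ioo hab.ne]; exact ⟨le_refl a, hab.le⟩
  have hslope : Tendsto (slope G a) (𝓝[Set.Ioo a b] a) (𝓝 g) :=
    (hasDerivAt_iff_tendsto_slope.mp hd).mono_left
      (nhdsWithin_mono _ (fun x hx => ne_of_gt hx.1))
  refine ge_of_tendsto hslope ?_
  filter_upwards [self_mem_nhdsWithin] with x hx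
  rw [slope_def_field]
  have h1 : 0 < x - a := by linarith [hx.1]
  have h2 : 0 ≤ G x - G a := by linarith [h x hx]
  positivity

lemma clf_deriv_nonpos_right {G : ℝ → ℝ} {g a b : ℝ} (hab : a < b)
    (hd : HasDerivAt G g a) (h : ∀ x ∈ Set.Ioo a b, G x ≤ G a) : g ≤ 0 := by
  have := clf_deriv_nonneg_right hab hd.neg (fun x hx => by simpa using h x hx)
  linarith

lemma clf_deriv_nonneg_left {G : ℝ → ℝ} {g a b : ℝ} (hab : a < b)
    (hd : HasDerivAt G g b) (h : ∀ x ∈ Set.Ioo a b, G x ≤ G b) : 0 ≤ g := by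
  have hne : (𝓝[Set.Ioo a b] b).NeBot := by
    refine mem_closure_iff_nhdsWithin_neBot.mp ?_
    rw [closure_Ioo hab.ne]; exact ⟨hab.le, le_refl b⟩
  have hslope : Tendsto (slope G b) (𝓝[Set.Ioo a b] b) (𝓝 g) :=
    (hasDerivAt_iff_tendsto_slope.mp hd).mono_left
      (nhdsWithin_mono _ (fun x hx => ne_of_lt hx.2))
  refine ge_of_tendsto hslope ?_
  filter_upwards [self_mem_nhdsWithin] with x hx
  rw [slope_def_field]
  have h1 : 0 < b - x := by linarith [hx.2]
  have h2 : 0 ≤ G b - G x := by linarith [h x hx]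
  have : (G x - G b) / (x - b) = (G b - G x) / (b - x) := by
    rw [← neg_div_neg_eq]; ring_nf
  rw [this]; positivity

lemma clf_deriv_nonpos_left {G : ℝ → ℝ} {g a b : ℝ} (hab : a < b)
    (hd : HasDerivAt G g b) (h : ∀ x ∈ Set.Ioo a b, G b ≤ G x) : g ≤ 0 := by
  have := clf_deriv_nonneg_left hab hd.neg (fun x hx => by simpa using h x hx)
  linarith


lemma clf_gap {G : ℝ → ℝ} (hc : Continuous G) {a b : ℝ} (hab : a < b)
    (h : ∀ x ∈ Set.Ioo a b, ¬ ∃ m : ℤ, G x = m) :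
    ∃ m : ℤ, ∀ x ∈ Set.Ioo a b, (m:ℝ) < G x ∧ G x < m + 1 := by
  set c := (a+b)/2 with hc0
  have hcm : c ∈ Set.Ioo a b := ⟨by rw [hc0]; linarith, by rw [hc0]; linarith⟩
  refine ⟨⌊G c⌋, fun x hx => ?_⟩
  have hsub : Set.uIcc x c ⊆ Set.Ioo a b := (Set.ordConnected_Ioo).uIcc_subset hx hcm
  have hivt : Set.uIcc (G x) (G c) ⊆ G '' Set.uIcc x c :=
    intermediate_value_uIcc (hc.continuousOn)
  constructor
  · by_contra hle
    push_neg at hle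
    have hmem : (⌊G c⌋ : ℝ) ∈ Set.uIcc (G x) (G c) := by
      rw [Set.mem_uIcc]; left; exact ⟨hle, Int.floor_le _⟩
    obtain ⟨y, hy, hGy⟩ := hivt hmem
    exact h y (hsub hy) ⟨⌊G c⌋, hGy⟩
  · by_contra hle
    push_neg at hle
    have hmem : ((⌊G c⌋ + 1 : ℤ) : ℝ) ∈ Set.uIcc (G x) (G c) := by
      rw [Set.mem_uIcc]; right
      constructor
      · push_cast; exact (Int.lt_floor_add_one _).le
      · push_cast; exact hle
    obtain ⟨y, hy, hGy⟩ := hivt hmem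
    exact h y (hsub hy) ⟨⌊G c⌋ + 1, hGy⟩

lemma clf_endpoint_le {G : ℝ → ℝ} (hc : Continuous G) {a b : ℝ} {m : ℤ} (hab : a < b)
    (h : ∀ x ∈ Set.Ioo a b, (m:ℝ) < G x ∧ G x < m + 1) :
    ((m:ℝ) ≤ G a ∧ G a ≤ m + 1) ∧ ((m:ℝ) ≤ G b ∧ G b ≤ m + 1) := by
  have hnea : (𝓝[Set.Ioo a b] a).NeBot := by
    refine mem_closure_iff_nhdsWithin_neBot.mp ?_
    rw [closure_Ioo hab.ne]; exact ⟨le_refl a, hab.le⟩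
  have hneb : (𝓝[Set.Ioo a b] b).NeBot := by
    refine mem_closure_iff_nhdsWithin_neBot.mp ?_
    rw [closure_Ioo hab.ne]; exact ⟨hab.le, le_refl b⟩
  have hta : Tendsto G (𝓝[Set.Ioo a b] a) (𝓝 (G a)) :=
    (hc.continuousAt).continuousWithinAt.tendsto
  have htb : Tendsto G (𝓝[Set.Ioo a b] b) (𝓝 (G b)) :=
    (hc.continuousAt).continuousWithinAt.tendsto
  refine ⟨⟨ge_of_tendsto hta ?_, le_of_tendsto hta ?_⟩,
    ⟨ge_of_tendsto htb ?_, le_of_tendsto htb ?_⟩⟩ <;>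
  · filter_upwards [self_mem_nhdsWithin] with x hx
    first
      | exact (h x hx).1.le
      | exact (h x hx).2.le


lemma clf_key (G : ℝ → ℝ) (hG : ∀ x, HasDerivAt G (deriv G x) x) :
    ∀ n : ℕ, ∀ a b : ℝ, ∀ ma mb : ℤ, a < b → G a = ma → G b = mb →
    ∀ hfin : {x ∈ Set.Icc a b | ∃ m : ℤ, G x = m}.Finite,
    hfin.toFinset.card ≤ n →
    (∀ x ∈ Set.Icc a b, (∃ m : ℤ, G x = m) → deriv G x ≠ 0) →
    2 * (∑ x ∈ hfin.toFinset, (if deriv G x < 0 then (-1:ℤ) else 1))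
      = 2 * (mb - ma) + (if deriv G a < 0 then (-1:ℤ) else 1)
        + (if deriv G b < 0 then (-1:ℤ) else 1) := by
  have hGc : Continuous G := continuous_iff_continuousAt.mpr fun x => (hG x).continuousAt
  intro n
  induction n with
  | zero =>
    intro a b ma mb hab hGa hGb hfin hcard hnd
    exfalso
    have ha : a ∈ hfin.toFinset := by
      rw [Set.Finite.mem_toFinset]; exact ⟨⟨le_refl a, hab.le⟩, ⟨ma, hGa⟩⟩
    have := Finset.card_pos.mpr ⟨a, ha⟩
    omega
  | succ n ih =>
    intro a b ma mb hab hGa hGb hfin hcard hnd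
    by_cases hint : ∃ c ∈ Set.Ioo a b, ∃ m : ℤ, G c = m
    · obtain ⟨c, hcmem, mc, hGmc⟩ := hint
      have hac : a < c := hcmem.1
      have hcb : c < b := hcmem.2
      have hfac : {x ∈ Set.Icc a c | ∃ m : ℤ, G x = m}.Finite :=
        hfin.subset fun x hx => ⟨⟨hx.1.1, hx.1.2.trans hcb.le⟩, hx.2⟩
      have hfcb : {x ∈ Set.Icc c b | ∃ m : ℤ, G x = m}.Finite :=
        hfin.subset fun x hx => ⟨⟨hac.le.trans hx.1.1, hx.1.2⟩, hx.2⟩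
      have hsub1 : hfac.toFinset ⊆ hfin.toFinset := by
        intro x hx
        rw [Set.Finite.mem_toFinset] at *
        exact ⟨⟨hx.1.1, hx.1.2.trans hcb.le⟩, hx.2⟩
      have hsub2 : hfcb.toFinset ⊆ hfin.toFinset := by
        intro x hx
        rw [Set.Finite.mem_toFinset] at *
        exact ⟨⟨hac.le.trans hx.1.1, hx.1.2⟩, hx.2⟩
      have hb1 : b ∈ hfin.toFinset := by
        rw [Set.Finite.mem_toFinset]; exact ⟨⟨hab.le, le_refl b⟩, ⟨mb, hGb⟩⟩
      have hb2 : b ∉ hfac.toFinset := by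
        rw [Set.Finite.mem_toFinset]
        intro hx; exact absurd hx.1.2 (not_le.mpr hcb)
      have ha1 : a ∈ hfin.toFinset := by
        rw [Set.Finite.mem_toFinset]; exact ⟨⟨le_refl a, hab.le⟩, ⟨ma, hGa⟩⟩
      have ha2 : a ∉ hfcb.toFinset := by
        rw [Set.Finite.mem_toFinset]
        intro hx; exact absurd hx.1.1 (not_le.mpr hac)
      have hcard1 : hfac.toFinset.card ≤ n := by
        have := Finset.card_lt_card (Finset.ssubset_iff_of_subset hsub1 |>.mpr ⟨b, hb1, hb2⟩)
        omega
      have hcard2 : hfcb.toFinset.card ≤ n := by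
        have := Finset.card_lt_card (Finset.ssubset_iff_of_subset hsub2 |>.mpr ⟨a, ha1, ha2⟩)
        omega
      have e1 := ih a c ma mc hac hGa hGmc hfac hcard1
        (fun x hx hp => hnd x ⟨hx.1, hx.2.trans hcb.le⟩ hp)
      have e2 := ih c b mc mb hcb hGmc hGb hfcb hcard2
        (fun x hx hp => hnd x ⟨hac.le.trans hx.1, hx.2⟩ hp)
      have hun : hfin.toFinset = hfac.toFinset ∪ hfcb.toFinset := by
        ext x
        simp only [Set.Finite.mem_toFinset, Finset.mem_union, Set.mem_setOf_eq,
          Set.mem_Icc]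
        constructor
        · rintro ⟨⟨h1, h2⟩, hp⟩
          rcases le_total x c with h | h
          · exact Or.inl ⟨⟨h1, h⟩, hp⟩
          · exact Or.inr ⟨⟨h, h2⟩, hp⟩
        · rintro (⟨⟨h1, h2⟩, hp⟩ | ⟨⟨h1, h2⟩, hp⟩)
          · exact ⟨⟨h1, h2.trans hcb.le⟩, hp⟩
          · exact ⟨⟨hac.le.trans h1, h2⟩, hp⟩
      have hinter : hfac.toFinset ∩ hfcb.toFinset = {c} := by
        ext x
        simp only [Set.Finite.mem_toFinset, Finset.mem_inter, Set.mem_setOf_eq,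
          Set.mem_Icc, Finset.mem_singleton]
        constructor
        · rintro ⟨⟨⟨_, h1⟩, _⟩, ⟨⟨h2, _⟩, _⟩⟩
          exact le_antisymm h1 h2
        · rintro rfl
          exact ⟨⟨⟨hac.le, le_refl x⟩, ⟨mc, hGmc⟩⟩, ⟨⟨le_refl x, hcb.le⟩, ⟨mc, hGmc⟩⟩⟩
      have e3 : (∑ x ∈ hfac.toFinset ∪ hfcb.toFinset, (if deriv G x < 0 then (-1:ℤ) else 1))
          + (∑ x ∈ hfac.toFinset ∩ hfcb.toFinset, (if deriv G x < 0 then (-1:ℤ) else 1))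
          = (∑ x ∈ hfac.toFinset, (if deriv G x < 0 then (-1:ℤ) else 1))
          + (∑ x ∈ hfcb.toFinset, (if deriv G x < 0 then (-1:ℤ) else 1)) :=
        Finset.sum_union_inter
      rw [← hun, hinter, Finset.sum_singleton] at e3
      omega
    · push_neg at hint
      obtain ⟨m, hm⟩ := clf_gap hGc hab fun x hx hp => by
        obtain ⟨k, hk⟩ := hp; exact (hint x hx k hk).elim
      have hset : hfin.toFinset = {a, b} := by
        ext x
        simp only [Set.Finite.mem_toFinset, Set.mem_setOf_eq, Set.mem_Icc,
          Finset.mem_insert, Finset.mem_singleton]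
        constructor
        · rintro ⟨⟨h1, h2⟩, k, hk⟩
          rcases eq_or_lt_of_le h1 with h | h
          · exact Or.inl h.symm
          rcases eq_or_lt_of_le h2 with h' | h'
          · exact Or.inr h'
          exact (hint x ⟨h, h'⟩ k hk).elim
        · rintro (rfl | rfl)
          · exact ⟨⟨le_refl x, hab.le⟩, ⟨ma, hGa⟩⟩
          · exact ⟨⟨hab.le, le_refl x⟩, ⟨mb, hGb⟩⟩
      rw [hset, Finset.sum_pair hab.ne]
      obtain ⟨⟨ha1, ha2⟩, ⟨hb1, hb2⟩⟩ := clf_endpoint_le hGc hab hm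
      rw [hGa] at ha1 ha2
      rw [hGb] at hb1 hb2
      have hma : ma = m ∨ ma = m + 1 := by
        have t1 : m ≤ ma := by exact_mod_cast ha1
        have t2 : ma ≤ m + 1 := by exact_mod_cast ha2
        omega
      have hmb : mb = m ∨ mb = m + 1 := by
        have t1 : m ≤ mb := by exact_mod_cast hb1
        have t2 : mb ≤ m + 1 := by exact_mod_cast hb2
        omega
      have hnda : deriv G a ≠ 0 := hnd a ⟨le_refl a, hab.le⟩ ⟨ma, hGa⟩
      have hndb : deriv G b ≠ 0 := hnd b ⟨hab.le, le_refl b⟩ ⟨mb, hGb⟩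
      have hsa : (if deriv G a < 0 then (-1:ℤ) else 1) = if ma = m then 1 else -1 := by
        rcases hma with h | h
        · have : 0 ≤ deriv G a := clf_deriv_nonneg_right hab (hG a)
            (fun x hx => by rw [hGa, h]; exact (hm x hx).1.le)
          rw [if_neg (not_lt.mpr this), if_pos h]
        · have h0 : deriv G a ≤ 0 := clf_deriv_nonpos_right hab (hG a)
            (fun x hx => by rw [hGa, h]; push_cast; exact (hm x hx).2.le)
          rw [if_pos (lt_of_le_of_ne h0 hnda), if_neg (by omega)]
      have hsb : (if deriv G b < 0 then (-1:ℤ) else 1) = if mb = m then -1 else 1 := by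
        rcases hmb with h | h
        · have h0 : deriv G b ≤ 0 := clf_deriv_nonpos_left hab (hG b)
            (fun x hx => by rw [hGb, h]; exact (hm x hx).1.le)
          rw [if_pos (lt_of_le_of_ne h0 hndb), if_pos h]
        · have : 0 ≤ deriv G b := clf_deriv_nonneg_left hab (hG b)
            (fun x hx => by rw [hGb, h]; push_cast; exact (hm x hx).2.le)
          rw [if_neg (not_lt.mpr this), if_neg (by omega)]
      rw [hsa, hsb]
      rcases hma with h | h <;> rcases hmb with h' | h' <;>
        simp [h, h']


lemma clf_int_eq_of_abs_lt' {k m : ℤ} (h : |(k:ℝ) - m| < 1) : k = m := by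
  have h2 : |((k - m : ℤ) : ℝ)| < 1 := by push_cast; exact h
  have h3 : (|k - m| : ℝ) < 1 := by rw [← Int.cast_abs] at h2; exact_mod_cast h2
  have h4 : |k - m| < 1 := by exact_mod_cast h3
  rw [abs_lt] at h4; omega

lemma clf_finite (G : ℝ → ℝ) (hG : ∀ x, HasDerivAt G (deriv G x) x) {K : Set ℝ}
    (hK : IsCompact K)
    (hnd : ∀ x ∈ K, (∃ m : ℤ, G x = m) → deriv G x ≠ 0) :
    {x ∈ K | ∃ m : ℤ, G x = m}.Finite := by
  set S := {x ∈ K | ∃ m : ℤ, G x = m} with hS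
  by_contra hinf
  rw [← Set.not_infinite, not_not] at hinf
  obtain ⟨x₀, hx₀K, hacc⟩ := hinf.exists_accPt_of_subset_isCompact hK
    (fun x hx => hx.1)
  rw [accPt_principal_iff_clusterPt] at hacc
  have hL : (𝓝[S \ {x₀}] x₀).NeBot := by rw [nhdsWithin]; exact hacc
  have htend : Tendsto G (𝓝[S \ {x₀}] x₀) (𝓝 (G x₀)) :=
    ((hG x₀).continuousAt).continuousWithinAt.tendsto
  have hev : ∀ᶠ x in 𝓝[S \ {x₀}] x₀, G x ∈ Set.range ((↑) : ℤ → ℝ) := by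
    filter_upwards [self_mem_nhdsWithin] with x hx
    obtain ⟨m, hm⟩ := hx.1.2
    exact ⟨m, hm.symm⟩
  have hx₀Z : G x₀ ∈ Set.range ((↑) : ℤ → ℝ) :=
    Int.isClosedEmbedding_coe_real.isClosed_range.mem_of_tendsto htend hev
  obtain ⟨m, hm⟩ := hx₀Z
  have hevm : ∀ᶠ x in 𝓝[S \ {x₀}] x₀, G x = G x₀ := by
    have hd : ∀ᶠ x in 𝓝[S \ {x₀}] x₀, dist (G x) (G x₀) < 1/2 :=
      htend (Metric.ball_mem_nhds _ (by norm_num))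
    filter_upwards [hd, self_mem_nhdsWithin] with x hx1 hx2
    obtain ⟨k, hk⟩ := hx2.1.2
    rw [hk, ← hm]
    rw [hk, ← hm, Real.dist_eq] at hx1
    exact_mod_cast clf_int_eq_of_abs_lt (by linarith [hx1])
  have hslope : Tendsto (slope G x₀) (𝓝[S \ {x₀}] x₀) (𝓝 (deriv G x₀)) :=
    (hasDerivAt_iff_tendsto_slope.mp (hG x₀)).mono_left
      (nhdsWithin_mono _ (fun x hx => hx.2))
  have hslope0 : Tendsto (slope G x₀) (𝓝[S \ {x₀}] x₀) (𝓝 0) := by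
    refine Tendsto.congr' ?_ tendsto_const_nhds
    filter_upwards [hevm] with x hx
    rw [slope_def_field, hx, sub_self, zero_div]
  have := tendsto_nhds_unique hslope hslope0
  exact hnd x₀ hx₀K ⟨m, hm.symm⟩ this


/-- Lefschetz fixed-point theorem for the circle: if `f : S¹ → S¹` is a smooth map of
degree `d`, given by a smooth lift `F : ℝ → ℝ` with `F(x+1) = F(x) + d`, and all fixed
points (solutions of `F x - x ∈ ℤ` in `[0,1)`) are nondegenerate (`F' ≠ 1` there), then
the fixed-point set is finite and the sum of the local indices (`+1` if `F' < 1`, `-1` if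
`F' > 1`) equals the Lefschetz number `1 - d`. -/
theorem circle_lefschetz_fixed_point (F : ℝ → ℝ) (d : ℤ)
    (hF : ContDiff ℝ (⊤ : ℕ∞) F) (hdeg : ∀ x : ℝ, F (x + 1) = F x + d)
    (hnondeg : ∀ x ∈ {x ∈ Set.Ico (0 : ℝ) 1 | ∃ m : ℤ, F x = x + m}, deriv F x ≠ 1) :
    ∃ hfin : {x ∈ Set.Ico (0 : ℝ) 1 | ∃ m : ℤ, F x = x + m}.Finite,
      (∑ x ∈ hfin.toFinset, (if deriv F x < 1 then (1 : ℤ) else -1)) = 1 - d := by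
  set G : ℝ → ℝ := fun x => F x - x with hGdef
  have hdiffF : ∀ x, HasDerivAt F (deriv F x) x :=
    fun x => (hF.differentiable (by simp) x).hasDerivAt
  have hGd : ∀ x, HasDerivAt G (deriv F x - 1) x :=
    fun x => (hdiffF x).sub (hasDerivAt_id x)
  have hderivG : ∀ x, deriv G x = deriv F x - 1 := fun x => (hGd x).deriv
  have hG : ∀ x, HasDerivAt G (deriv G x) x := fun x => by
    rw [hderivG]; exact hGd x
  have hGc : Continuous G := continuous_iff_continuousAt.mpr fun x => (hG x).continuousAt
  have hGper : ∀ x, G (x + 1) = G x + ((d : ℝ) - 1) := by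
    intro x; simp only [hGdef, hdeg x]; ring
  have hFder : ∀ x, deriv F (x + 1) = deriv F x := by
    intro x
    have h1 : HasDerivAt (fun y => F (y + 1)) (deriv F (x + 1)) x := by
      have := (hdiffF (x + 1)).comp x ((hasDerivAt_id x).add_const 1)
      simpa [Function.comp_def] using this
    have h2 : HasDerivAt (fun y => F (y + 1)) (deriv F x) x := by
      have h3 : (fun y => F (y + 1)) = fun y => F y + d := funext hdeg
      rw [h3]
      exact (hdiffF x).add_const _
    exact h1.unique h2
  have hGderper : ∀ x, deriv G (x + 1) = deriv G x := by
    intro x; rw [hderivG, hderivG, hFder]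
  have hP : ∀ x : ℝ, (∃ m : ℤ, F x = x + m) ↔ (∃ m : ℤ, G x = m) := by
    intro x
    constructor
    · rintro ⟨m, hm⟩; exact ⟨m, by simp only [hGdef]; linarith⟩
    · rintro ⟨m, hm⟩; exact ⟨m, by simp only [hGdef] at hm; linarith⟩
  have hPper : ∀ x : ℝ, (∃ m : ℤ, G x = m) → (∃ m : ℤ, G (x + 1) = m) := by
    rintro x ⟨m, hm⟩
    exact ⟨m + (d - 1), by rw [hGper, hm]; push_cast; ring⟩
  have hPper' : ∀ x : ℝ, (∃ m : ℤ, G (x + 1) = m) → (∃ m : ℤ, G x = m) := by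
    rintro x ⟨m, hm⟩
    refine ⟨m - (d - 1), ?_⟩
    have := hGper x
    rw [hm] at this
    push_cast
    linarith
  -- nondegeneracy on the closed interval
  have hndIcc : ∀ x ∈ Set.Icc (0:ℝ) 1, (∃ m : ℤ, G x = m) → deriv G x ≠ 0 := by
    intro x hx hp
    rcases lt_or_eq_of_le hx.2 with h | h
    · have := hnondeg x ⟨⟨hx.1, h⟩, (hP x).mpr hp⟩
      rw [hderivG]
      intro hc; exact this (by linarith)
    · subst h
      have hp0 : ∃ m : ℤ, G 0 = m := hPper' 0 (by simpa using hp)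
      have := hnondeg 0 ⟨⟨le_refl 0, one_pos⟩, (hP 0).mpr hp0⟩
      have he : deriv G 1 = deriv G 0 := by simpa using hGderper 0
      rw [he, hderivG]
      intro hc; exact this (by linarith)
  have hT : {x ∈ Set.Icc (0:ℝ) 1 | ∃ m : ℤ, G x = m}.Finite :=
    clf_finite G hG isCompact_Icc hndIcc
  have hfin : {x ∈ Set.Ico (0 : ℝ) 1 | ∃ m : ℤ, F x = x + m}.Finite :=
    hT.subset fun x hx => ⟨⟨hx.1.1, hx.1.2.le⟩, (hP x).mp hx.2⟩
  refine ⟨hfin, ?_⟩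
  -- rewrite summand
  have hsummand : ∀ x : ℝ, (if deriv F x < 1 then (1:ℤ) else -1)
      = -(if deriv G x < 0 then (-1:ℤ) else 1) := by
    intro x
    rw [hderivG]
    by_cases h : deriv F x < 1
    · rw [if_pos h, if_pos (by linarith)]; ring
    · rw [if_neg h, if_neg (by intro hc; exact h (by linarith))]
  have hsum : (∑ x ∈ hfin.toFinset, (if deriv F x < 1 then (1 : ℤ) else -1))
      = -(∑ x ∈ hfin.toFinset, (if deriv G x < 0 then (-1:ℤ) else 1)) := by
    rw [← Finset.sum_neg_distrib]
    exact Finset.sum_congr rfl fun x _ => hsummand x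
  rw [hsum]
  suffices hS : (∑ x ∈ hfin.toFinset, (if deriv G x < 0 then (-1:ℤ) else 1)) = d - 1 by
    rw [hS]; ring
  by_cases hne : {x ∈ Set.Ico (0 : ℝ) 1 | ∃ m : ℤ, F x = x + m}.Nonempty
  · obtain ⟨p, hp⟩ := hne
    obtain ⟨mp, hmp⟩ := (hP p).mp hp.2
    have hp0 : (0:ℝ) ≤ p := hp.1.1
    have hp1 : p < 1 := hp.1.2
    have hab : p < p + 1 := by linarith
    have hGb : G (p + 1) = ((mp + (d - 1) : ℤ) : ℝ) := by
      rw [hGper, hmp]; push_cast; ring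
    -- finiteness on [p, p+1]
    have hfinab : {x ∈ Set.Icc p (p + 1) | ∃ m : ℤ, G x = m}.Finite := by
      have hsub : {x ∈ Set.Icc p (p + 1) | ∃ m : ℤ, G x = m} ⊆
          {x ∈ Set.Icc (0:ℝ) 1 | ∃ m : ℤ, G x = m} ∪
            (fun y => y + 1) '' {x ∈ Set.Icc (0:ℝ) 1 | ∃ m : ℤ, G x = m} := by
        rintro x ⟨⟨hx1, hx2⟩, hpx⟩
        rcases le_or_gt x 1 with h | h
        · exact Or.inl ⟨⟨by linarith, h⟩, hpx⟩
        · refine Or.inr ⟨x - 1, ⟨⟨by linarith, by linarith⟩, ?_⟩, by ring⟩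
          exact hPper' (x - 1) (by simpa using hpx)
      exact (hT.union (hT.image _)).subset hsub
    have hndab : ∀ x ∈ Set.Icc p (p + 1), (∃ m : ℤ, G x = m) → deriv G x ≠ 0 := by
      rintro x ⟨hx1, hx2⟩ hpx
      rcases le_or_gt x 1 with h | h
      · exact hndIcc x ⟨by linarith, h⟩ hpx
      · have h1 : x - 1 ∈ Set.Icc (0:ℝ) 1 := ⟨by linarith, by linarith⟩
        have h2 : (∃ m : ℤ, G (x - 1) = m) := hPper' (x - 1) (by simpa using hpx)
        have h3 : deriv G x = deriv G (x - 1) := by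
          have := hGderper (x - 1); simpa using this
        rw [h3]
        exact hndIcc (x - 1) h1 h2
    have hkey := clf_key G hG hfinab.toFinset.card p (p + 1) mp (mp + (d - 1))
      hab hmp hGb hfinab le_rfl hndab
    have hσper : (if deriv G (p + 1) < 0 then (-1:ℤ) else 1)
        = (if deriv G p < 0 then (-1:ℤ) else 1) := by rw [hGderper]
    -- p+1 is in the set
    have hpb : (p + 1) ∈ hfinab.toFinset := by
      rw [Set.Finite.mem_toFinset]
      exact ⟨⟨hab.le, le_refl _⟩, ⟨mp + (d - 1), hGb⟩⟩
    have herase : (∑ x ∈ hfinab.toFinset.erase (p + 1),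
          (if deriv G x < 0 then (-1:ℤ) else 1))
        + (if deriv G (p + 1) < 0 then (-1:ℤ) else 1)
        = ∑ x ∈ hfinab.toFinset, (if deriv G x < 0 then (-1:ℤ) else 1) :=
      Finset.sum_erase_add _ _ hpb
    -- the bijection
    have hbij : (∑ x ∈ hfin.toFinset, (if deriv G x < 0 then (-1:ℤ) else 1))
        = ∑ x ∈ hfinab.toFinset.erase (p + 1), (if deriv G x < 0 then (-1:ℤ) else 1) := by
      refine Finset.sum_nbij' (i := fun x => if x < p then x + 1 else x)
        (j := fun y => if y < 1 then y else y - 1) ?_ ?_ ?_ ?_ ?_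
      · intro x hx
        beta_reduce
        rw [Set.Finite.mem_toFinset] at hx
        obtain ⟨⟨hx0, hx1⟩, hxp⟩ := hx
        rw [Finset.mem_erase, Set.Finite.mem_toFinset]
        by_cases h : x < p
        · rw [if_pos h]
          refine ⟨by intro hc; exact absurd (by linarith : x = p) h.ne, ?_⟩
          exact ⟨⟨by linarith, by linarith⟩, hPper x ((hP x).mp hxp)⟩
        · rw [if_neg h]
          push_neg at h
          exact ⟨by intro hc; linarith, ⟨⟨h, by linarith⟩, (hP x).mp hxp⟩⟩
      · intro y hy
        rw [Finset.mem_erase, Set.Finite.mem_toFinset] at hy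
        obtain ⟨hyne, ⟨⟨hy1, hy2⟩, hyp⟩⟩ := hy
        beta_reduce
        rw [Set.Finite.mem_toFinset]
        by_cases h : y < 1
        · rw [if_pos h]
          exact ⟨⟨by linarith, h⟩, (hP y).mpr hyp⟩
        · rw [if_neg h]
          push_neg at h
          have hylt : y - 1 < p := by
            rcases lt_or_eq_of_le hy2 with h' | h'
            · linarith
            · exact absurd h' hyne
          refine ⟨⟨by linarith, by linarith⟩, ?_⟩
          exact (hP (y - 1)).mpr (hPper' (y - 1) (by simpa using hyp))
      · intro x hx
        beta_reduce
        rw [Set.Finite.mem_toFinset] at hx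
        obtain ⟨⟨hx0, hx1⟩, _⟩ := hx
        by_cases h : x < p
        · rw [if_pos h, if_neg (not_lt.mpr (by linarith : (1:ℝ) ≤ x + 1))]; ring
        · rw [if_neg h, if_pos hx1]
      · intro y hy
        rw [Finset.mem_erase, Set.Finite.mem_toFinset] at hy
        obtain ⟨hyne, ⟨⟨hy1, hy2⟩, _⟩⟩ := hy
        beta_reduce
        by_cases h : y < 1
        · rw [if_pos h, if_neg (not_lt.mpr hy1)]
        · push_neg at h
          have hylt : y - 1 < p := by
            rcases lt_or_eq_of_le hy2 with h' | h'
            · linarith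
            · exact absurd h' hyne
          rw [if_neg (not_lt.mpr h), if_pos hylt]; ring
      · intro x hx
        beta_reduce
        rw [Set.Finite.mem_toFinset] at hx
        by_cases h : x < p
        · rw [if_pos h, hGderper x]
        · rw [if_neg h]
    rw [hbij]
    have : (2:ℤ) * (mp + (d - 1) - mp) = 2 * (d - 1) := by ring
    omega
  · -- empty fixed point set: must have d = 1
    rw [Set.not_nonempty_iff_eq_empty] at hne
    have hd1 : d = 1 := by
      by_contra hd
      have hnoP : ∀ x ∈ Set.Icc (0:ℝ) 1, ¬ ∃ m : ℤ, G x = m := by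
        intro x hx hp
        rcases lt_or_eq_of_le hx.2 with h | h
        · have : x ∈ {x ∈ Set.Ico (0 : ℝ) 1 | ∃ m : ℤ, F x = x + m} :=
            ⟨⟨hx.1, h⟩, (hP x).mpr hp⟩
          rw [hne] at this
          exact this
        · subst h
          have hp0 : ∃ m : ℤ, G 0 = m := hPper' 0 (by simpa using hp)
          have : (0:ℝ) ∈ {x ∈ Set.Ico (0 : ℝ) 1 | ∃ m : ℤ, F x = x + m} :=
            ⟨⟨le_refl 0, one_pos⟩, (hP 0).mpr hp0⟩
          rw [hne] at this
          exact this
      have hG1 : G 1 = G 0 + ((d:ℝ) - 1) := by simpa using hGper 0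
      rcases lt_or_gt_of_ne hd with h | h
      · -- d < 1, so d ≤ 0 : G 1 ≤ G 0 - 1
        have hdle : (d:ℝ) ≤ 0 := by exact_mod_cast (by omega : d ≤ 0)
        have hm1 : ((⌈G 0⌉ - 1 : ℤ) : ℝ) < G 0 := by
          push_cast
          linarith [Int.ceil_lt_add_one (G 0)]
        have hm2 : G 1 ≤ ((⌈G 0⌉ - 1 : ℤ) : ℝ) := by
          push_cast
          linarith [Int.le_ceil (G 0)]
        have hmem : ((⌈G 0⌉ - 1 : ℤ) : ℝ) ∈ Set.Icc (G 1) (G 0) := ⟨hm2, hm1.le⟩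
        obtain ⟨y, hy, hGy⟩ := intermediate_value_Icc' (by norm_num : (0:ℝ) ≤ 1)
          hGc.continuousOn hmem
        exact hnoP y hy ⟨⌈G 0⌉ - 1, hGy⟩
      · -- d > 1, so d ≥ 2 : G 1 ≥ G 0 + 1
        have hdge : (2:ℝ) ≤ (d:ℝ) := by exact_mod_cast (by omega : (2:ℤ) ≤ d)
        have hm1 : G 0 < ((⌊G 0⌋ + 1 : ℤ) : ℝ) := by
          push_cast
          linarith [Int.lt_floor_add_one (G 0)]
        have hm2 : ((⌊G 0⌋ + 1 : ℤ) : ℝ) ≤ G 1 := by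
          push_cast
          linarith [Int.floor_le (G 0)]
        have hmem : ((⌊G 0⌋ + 1 : ℤ) : ℝ) ∈ Set.Icc (G 0) (G 1) := ⟨hm1.le, hm2⟩
        obtain ⟨y, hy, hGy⟩ := intermediate_value_Icc (by norm_num : (0:ℝ) ≤ 1)
          hGc.continuousOn hmem
        exact hnoP y hy ⟨⌊G 0⌋ + 1, hGy⟩
    have hempty : hfin.toFinset = ∅ := by
      rw [Finset.eq_empty_iff_forall_notMem]
      intro x hx
      rw [Set.Finite.mem_toFinset, hne] at hx
      exact hx
    rw [hempty, Finset.sum_empty, hd1]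
    ring
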